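/- (Dong's Lemma) Let W be a complex vector space and let a(z), b(z), c(z) be pairwise mutually local fields on W, i.e., for each pair there exists a nonnegative integer k with (z₁-z₂)^k a(z₁)b(z₂) = (z₁-z₂)^k b(z₂)a(z₁) (and similarly for the other pairs). Then for every n ∈ ℤ, the field a(z)_n b(z) and the field c(z) are mutually local. -/
import Mathlib

open Finset

variable {W : Type} [AddCommGroup W] [Module ℂ W]

/-- A field on `W`: modes truncate on every vector. -/
def FieldTrunc (a : ℤ → W →ₗ[ℂ] W) : Prop :=
  ∀ w : W, ∃ N : ℤ, ∀ k ≥ N, a k w = 0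

/-- Mutual locality of two fields, in mode form: for some `k ≥ 0`,
`(z₁-z₂)^k a(z₁)b(z₂) = (z₁-z₂)^k b(z₂)a(z₁)`. -/
def MutLocal (a b : ℤ → W →ₗ[ℂ] W) : Prop :=
  ∃ k : ℕ, ∀ m n : ℤ, ∀ w : W,
    (∑ i ∈ Finset.range (k + 1), ((-1 : ℂ) ^ i * (k.choose i : ℂ)) •
      a (m + k - i) (b (n + i) w)) =
    ∑ i ∈ Finset.range (k + 1), ((-1 : ℂ) ^ i * (k.choose i : ℂ)) •
      b (n + i) (a (m + k - i) w)

/-- Modes of the `n`-th product `a(z)_n b(z)` of two fields, applied to `w`. -/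
noncomputable def nthProd (a b : ℤ → W →ₗ[ℂ] W) (n m : ℤ) (w : W) : W :=
  ∑ᶠ i : ℕ, ((-1 : ℂ) ^ i * ((Ring.choose n i : ℤ) : ℂ)) •
    (a (n - i) (b (m + i) w) - ((-1 : ℂ) ^ n) • b (m + n - i) (a i w))

namespace DongAux

variable {W : Type} [AddCommGroup W] [Module ℂ W]

abbrev V2 (W : Type) [AddCommGroup W] [Module ℂ W] := ℤ → ℤ → W
abbrev V3 (W : Type) [AddCommGroup W] [Module ℂ W] := ℤ → ℤ → ℤ → W

def shA : Module.End ℂ (V3 W) where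
  toFun F := fun p q s => F (p+1) q s
  map_add' _ _ := rfl
  map_smul' _ _ := rfl

def shB : Module.End ℂ (V3 W) where
  toFun F := fun p q s => F p (q+1) s
  map_add' _ _ := rfl
  map_smul' _ _ := rfl

def shC : Module.End ℂ (V3 W) where
  toFun F := fun p q s => F p q (s+1)
  map_add' _ _ := rfl
  map_smul' _ _ := rfl

def shD : Module.End ℂ (V2 W) where
  toFun F := fun q s => F (q+1) s
  map_add' _ _ := rfl
  map_smul' _ _ := rfl

def shE : Module.End ℂ (V2 W) where
  toFun F := fun q s => F q (s+1)
  map_add' _ _ := rfl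
  map_smul' _ _ := rfl

def tAB : Module.End ℂ (V3 W) := shA - shB
def tAC : Module.End ℂ (V3 W) := shA - shC
def tBC : Module.End ℂ (V3 W) := shB - shC
def sQ : Module.End ℂ (V2 W) := shD - shE

lemma commute_shAB : Commute (shA (W := W)) shB := LinearMap.ext fun _ => rfl
lemma commute_shAC : Commute (shA (W := W)) shC := LinearMap.ext fun _ => rfl
lemma commute_shBC : Commute (shB (W := W)) shC := LinearMap.ext fun _ => rfl
lemma commute_shDE : Commute (shD (W := W)) shE := LinearMap.ext fun _ => rfl

lemma commute_tAB_tAC : Commute (tAB (W := W)) tAC :=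
  ((Commute.refl shA).sub_right commute_shAC).sub_left
    (commute_shAB.symm.sub_right commute_shBC)

lemma commute_tAB_tBC : Commute (tAB (W := W)) tBC :=
  (commute_shAB.sub_right commute_shAC).sub_left
    ((Commute.refl shB).sub_right commute_shBC)

lemma commute_tAC_tBC : Commute (tAC (W := W)) tBC :=
  (commute_shAB.sub_right commute_shAC).sub_left
    (commute_shBC.symm.sub_right (Commute.refl shC))

lemma tBC_eq : (tBC : Module.End ℂ (V3 W)) = tAC - tAB := by
  unfold tAB tAC tBC; abel


/-- Key telescoping/Pascal identity for alternating binomial-type sums. -/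
lemma telescope_pascal {M : Type} [AddCommGroup M] [Module ℂ M]
    (c d : ℕ → ℂ) (hd0 : d 0 = c 0) (hds : ∀ i, d (i+1) = c i + c (i+1))
    (f : ℕ → M) (B : ℕ) (hB : c B • f B = 0) :
    ∑ i ∈ range (B+1), ((-1:ℂ)^i * d i) • f i
      = ∑ i ∈ range B, ((-1:ℂ)^i * c i) • (f i - f (i+1)) := by
  have expand : ∀ i : ℕ, ((-1:ℂ)^(i+1) * d (i+1)) • f (i+1)
      = ((-1:ℂ)^(i+1) * c (i+1)) • f (i+1) - ((-1:ℂ)^i * c i) • f (i+1) := by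
    intro i
    have h : ((-1:ℂ)^(i+1) * d (i+1))
        = ((-1:ℂ)^(i+1) * c (i+1)) + (-((-1:ℂ)^i * c i)) := by
      rw [hds, pow_succ]; ring
    rw [h, add_smul, neg_smul, ← sub_eq_add_neg]
  rw [Finset.sum_range_succ' (fun i => ((-1:ℂ)^i * d i) • f i) B]
  simp only [expand]
  rw [Finset.sum_sub_distrib]
  have h2 : ∑ i ∈ range B, ((-1:ℂ)^(i+1) * c (i+1)) • f (i+1) + ((-1:ℂ)^0 * d 0) • f 0
      = ∑ i ∈ range B, ((-1:ℂ)^i * c i) • f i := by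
    rw [hd0, ← Finset.sum_range_succ' (fun i => ((-1:ℂ)^i * c i) • f i) B,
      Finset.sum_range_succ, mul_smul, hB, smul_zero, add_zero]
  have h3 : ∑ i ∈ range B, ((-1:ℂ)^i * c i) • (f i - f (i+1))
      = ∑ i ∈ range B, ((-1:ℂ)^i * c i) • f i
        - ∑ i ∈ range B, ((-1:ℂ)^i * c i) • f (i+1) := by
    simp only [smul_sub]; rw [Finset.sum_sub_distrib]
  rw [h3, ← h2]; abel

/-- Binomial expansion of a power of a difference of commuting endomorphisms. -/
lemma sub_pow_expand {M : Type} [AddCommGroup M] [Module ℂ M]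
    (A B : Module.End ℂ M) (h : Commute A B) (k : ℕ) :
    (A - B) ^ k = ∑ i ∈ range (k+1),
      ((-1 : ℂ) ^ i * (k.choose i : ℂ)) • (B ^ i * A ^ (k-i)) := by
  induction k with
  | zero => simp
  | succ k ih =>
    rw [pow_succ, ih, Finset.sum_mul]
    have hswap : ∀ i : ℕ, (B ^ i * A ^ (k - i)) * (A - B)
        = B ^ i * A ^ (k - i + 1) - B ^ (i+1) * A ^ (k - i) := by
      intro i
      have hc : A ^ (k - i) * B = B * A ^ (k - i) := (h.pow_left _).eq
      rw [mul_sub, pow_succ, pow_succ]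
      simp only [mul_assoc, hc]
    have step : ∀ i : ℕ, (((-1 : ℂ) ^ i * (k.choose i : ℂ)) • (B ^ i * A ^ (k-i))) * (A - B)
        = ((-1 : ℂ) ^ i * (k.choose i : ℂ)) • (B ^ i * A ^ (k - i + 1))
          - ((-1 : ℂ) ^ i * (k.choose i : ℂ)) • (B ^ (i+1) * A ^ (k - i)) := by
      intro i
      rw [smul_mul_assoc, hswap, smul_sub]
    rw [Finset.sum_congr rfl fun i _ => step i, Finset.sum_sub_distrib]
    have ht := telescope_pascal (fun i => (k.choose i : ℂ)) (fun i => ((k+1).choose i : ℂ))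
      (by simp) (by intro i; push_cast [Nat.choose_succ_succ]; ring)
      (fun i => B ^ i * A ^ (k+1-i)) (k+1)
      (by simp [Nat.choose_succ_self])
    rw [ht]
    have h3 : ∑ i ∈ range (k+1), ((-1:ℂ)^i * (k.choose i : ℂ)) •
          ((B ^ i * A ^ (k+1-i)) - (B ^ (i+1) * A ^ (k+1-(i+1))))
        = ∑ i ∈ range (k+1), ((-1:ℂ)^i * (k.choose i : ℂ)) • (B ^ i * A ^ (k+1-i))
          - ∑ i ∈ range (k+1), ((-1:ℂ)^i * (k.choose i : ℂ)) • (B ^ (i+1) * A ^ (k+1-(i+1))) := by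
      simp only [smul_sub]; rw [Finset.sum_sub_distrib]
    rw [h3]
    congr 1
    · refine Finset.sum_congr rfl fun i hi => ?_
      rw [Finset.mem_range] at hi
      have : k + 1 - i = k - i + 1 := by omega
      rw [this]
    · refine Finset.sum_congr rfl fun i hi => ?_
      rw [Finset.mem_range] at hi
      have : k + 1 - (i+1) = k - i := by omega
      rw [this]

lemma shA_pow : ∀ (j : ℕ) (F : V3 W) (p q s : ℤ), (shA ^ j) F p q s = F (p + j) q s := by
  intro j
  induction j with
  | zero => intro F p q s; simp
  | succ j ih =>
    intro F p q s
    rw [pow_succ, Module.End.mul_apply, ih]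
    show F (p + j + 1) q s = _
    congr 1; push_cast; ring

lemma shB_pow : ∀ (j : ℕ) (F : V3 W) (p q s : ℤ), (shB ^ j) F p q s = F p (q + j) s := by
  intro j
  induction j with
  | zero => intro F p q s; simp
  | succ j ih =>
    intro F p q s
    rw [pow_succ, Module.End.mul_apply, ih]
    show F p (q + j + 1) s = _
    congr 1; push_cast; ring

lemma shC_pow : ∀ (j : ℕ) (F : V3 W) (p q s : ℤ), (shC ^ j) F p q s = F p q (s + j) := by
  intro j
  induction j with
  | zero => intro F p q s; simp
  | succ j ih =>
    intro F p q s
    rw [pow_succ, Module.End.mul_apply, ih]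
    show F p q (s + j + 1) = _
    congr 1; push_cast; ring

lemma shD_pow : ∀ (j : ℕ) (F : V2 W) (q s : ℤ), (shD ^ j) F q s = F (q + j) s := by
  intro j
  induction j with
  | zero => intro F q s; simp
  | succ j ih =>
    intro F q s
    rw [pow_succ, Module.End.mul_apply, ih]
    show F (q + j + 1) s = _
    congr 1; push_cast; ring

lemma shE_pow : ∀ (j : ℕ) (F : V2 W) (q s : ℤ), (shE ^ j) F q s = F q (s + j) := by
  intro j
  induction j with
  | zero => intro F q s; simp
  | succ j ih =>
    intro F q s
    rw [pow_succ, Module.End.mul_apply, ih]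
    show F q (s + j + 1) = _
    congr 1; push_cast; ring

lemma tAB_pow_apply (k : ℕ) (F : V3 W) (p q s : ℤ) :
    (tAB ^ k) F p q s = ∑ i ∈ range (k+1),
      ((-1:ℂ)^i * (k.choose i : ℂ)) • F (p + k - i) (q + i) s := by
  rw [tAB, sub_pow_expand _ _ commute_shAB, LinearMap.sum_apply]
  simp only [LinearMap.smul_apply, Module.End.mul_apply, Finset.sum_apply, Pi.smul_apply,
    shB_pow, shA_pow]
  refine Finset.sum_congr rfl fun i hi => ?_
  rw [Finset.mem_range] at hi
  have h : p + ((k - i : ℕ) : ℤ) = p + k - i := by omega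
  rw [h]

lemma tAC_pow_apply (k : ℕ) (F : V3 W) (p q s : ℤ) :
    (tAC ^ k) F p q s = ∑ i ∈ range (k+1),
      ((-1:ℂ)^i * (k.choose i : ℂ)) • F (p + k - i) q (s + i) := by
  rw [tAC, sub_pow_expand _ _ commute_shAC, LinearMap.sum_apply]
  simp only [LinearMap.smul_apply, Module.End.mul_apply, Finset.sum_apply, Pi.smul_apply,
    shC_pow, shA_pow]
  refine Finset.sum_congr rfl fun i hi => ?_
  rw [Finset.mem_range] at hi
  have h : p + ((k - i : ℕ) : ℤ) = p + k - i := by omega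
  rw [h]

lemma tBC_pow_apply (k : ℕ) (F : V3 W) (p q s : ℤ) :
    (tBC ^ k) F p q s = ∑ i ∈ range (k+1),
      ((-1:ℂ)^i * (k.choose i : ℂ)) • F p (q + k - i) (s + i) := by
  rw [tBC, sub_pow_expand _ _ commute_shBC, LinearMap.sum_apply]
  simp only [LinearMap.smul_apply, Module.End.mul_apply, Finset.sum_apply, Pi.smul_apply,
    shC_pow, shB_pow]
  refine Finset.sum_congr rfl fun i hi => ?_
  rw [Finset.mem_range] at hi
  have h : q + ((k - i : ℕ) : ℤ) = q + k - i := by omega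
  rw [h]

lemma sQ_pow_apply (k : ℕ) (F : V2 W) (q s : ℤ) :
    (sQ ^ k) F q s = ∑ i ∈ range (k+1),
      ((-1:ℂ)^i * (k.choose i : ℂ)) • F (q + k - i) (s + i) := by
  rw [sQ, sub_pow_expand _ _ commute_shDE, LinearMap.sum_apply]
  simp only [LinearMap.smul_apply, Module.End.mul_apply, Finset.sum_apply, Pi.smul_apply,
    shE_pow, shD_pow]
  refine Finset.sum_congr rfl fun i hi => ?_
  rw [Finset.mem_range] at hi
  have h : q + ((k - i : ℕ) : ℤ) = q + k - i := by omega
  rw [h]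

/-! ### Truncation predicates -/

def UB2 (F : V3 W) : Prop := ∀ s : ℤ, ∃ N : ℤ, ∀ p q : ℤ, N ≤ q → F p q s = 0
def UB1 (F : V3 W) : Prop := ∀ s : ℤ, ∃ N : ℤ, ∀ p q : ℤ, N ≤ p → F p q s = 0

lemma UB2.add {F G : V3 W} (hF : UB2 F) (hG : UB2 G) : UB2 (F + G) := by
  intro s
  obtain ⟨N₁, h₁⟩ := hF s
  obtain ⟨N₂, h₂⟩ := hG s
  refine ⟨max N₁ N₂, fun p q hq => ?_⟩
  show F p q s + G p q s = 0
  rw [h₁ p q (le_trans (le_max_left _ _) hq), h₂ p q (le_trans (le_max_right _ _) hq), add_zero]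

lemma UB1.add {F G : V3 W} (hF : UB1 F) (hG : UB1 G) : UB1 (F + G) := by
  intro s
  obtain ⟨N₁, h₁⟩ := hF s
  obtain ⟨N₂, h₂⟩ := hG s
  refine ⟨max N₁ N₂, fun p q hq => ?_⟩
  show F p q s + G p q s = 0
  rw [h₁ p q (le_trans (le_max_left _ _) hq), h₂ p q (le_trans (le_max_right _ _) hq), add_zero]

lemma UB2.smul {F : V3 W} (c : ℂ) (hF : UB2 F) : UB2 (c • F) := by
  intro s
  obtain ⟨N, h⟩ := hF s
  exact ⟨N, fun p q hq => by show c • F p q s = 0; rw [h p q hq, smul_zero]⟩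

lemma UB1.smul {F : V3 W} (c : ℂ) (hF : UB1 F) : UB1 (c • F) := by
  intro s
  obtain ⟨N, h⟩ := hF s
  exact ⟨N, fun p q hq => by show c • F p q s = 0; rw [h p q hq, smul_zero]⟩

lemma UB2.tAB {F : V3 W} (hF : UB2 F) : UB2 (tAB F) := by
  intro s
  obtain ⟨N, h⟩ := hF s
  refine ⟨N, fun p q hq => ?_⟩
  show F (p+1) q s - F p (q+1) s = 0
  rw [h _ _ hq, h _ _ (by omega), sub_zero]

lemma UB1.tAB {F : V3 W} (hF : UB1 F) : UB1 (tAB F) := by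
  intro s
  obtain ⟨N, h⟩ := hF s
  refine ⟨N, fun p q hq => ?_⟩
  show F (p+1) q s - F p (q+1) s = 0
  rw [h _ _ (by omega), h _ _ hq, sub_zero]

lemma UB2.tAC {F : V3 W} (hF : UB2 F) : UB2 (tAC F) := by
  intro s
  obtain ⟨N₁, h₁⟩ := hF s
  obtain ⟨N₂, h₂⟩ := hF (s+1)
  refine ⟨max N₁ N₂, fun p q hq => ?_⟩
  show F (p+1) q s - F p q (s+1) = 0
  rw [h₁ _ _ (le_trans (le_max_left _ _) hq), h₂ _ _ (le_trans (le_max_right _ _) hq), sub_zero]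

lemma UB1.tAC {F : V3 W} (hF : UB1 F) : UB1 (tAC F) := by
  intro s
  obtain ⟨N₁, h₁⟩ := hF s
  obtain ⟨N₂, h₂⟩ := hF (s+1)
  refine ⟨max N₁ N₂, fun p q hq => ?_⟩
  show F (p+1) q s - F p q (s+1) = 0
  rw [h₁ _ _ (by omega), h₂ _ _ (le_trans (le_max_right _ _) hq), sub_zero]

lemma UB2.tBC {F : V3 W} (hF : UB2 F) : UB2 (tBC F) := by
  intro s
  obtain ⟨N₁, h₁⟩ := hF s
  obtain ⟨N₂, h₂⟩ := hF (s+1)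
  refine ⟨max N₁ N₂, fun p q hq => ?_⟩
  show F p (q+1) s - F p q (s+1) = 0
  rw [h₁ _ _ (by omega), h₂ _ _ (le_trans (le_max_right _ _) hq), sub_zero]

lemma UB1.tBC {F : V3 W} (hF : UB1 F) : UB1 (tBC F) := by
  intro s
  obtain ⟨N₁, h₁⟩ := hF s
  obtain ⟨N₂, h₂⟩ := hF (s+1)
  refine ⟨max N₁ N₂, fun p q hq => ?_⟩
  show F p (q+1) s - F p q (s+1) = 0
  rw [h₁ _ _ (le_trans (le_max_left _ _) hq), h₂ _ _ (le_trans (le_max_right _ _) hq), sub_zero]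

lemma UB2.powt {t : Module.End ℂ (V3 W)} (ht : ∀ G : V3 W, UB2 G → UB2 (t G)) :
    ∀ (j : ℕ) (F : V3 W), UB2 F → UB2 ((t ^ j) F) := by
  intro j
  induction j with
  | zero => intro F hF; simpa using hF
  | succ j ih =>
    intro F hF
    rw [pow_succ, Module.End.mul_apply]
    exact ih _ (ht _ hF)

lemma UB1.powt {t : Module.End ℂ (V3 W)} (ht : ∀ G : V3 W, UB1 G → UB1 (t G)) :
    ∀ (j : ℕ) (F : V3 W), UB1 F → UB1 ((t ^ j) F) := by
  intro j
  induction j with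
  | zero => intro F hF; simpa using hF
  | succ j ih =>
    intro F hF
    rw [pow_succ, Module.End.mul_apply]
    exact ih _ (ht _ hF)

lemma UB2.sum {ι : Type} (J : Finset ι) (F : ι → V3 W) (h : ∀ j ∈ J, UB2 (F j)) :
    UB2 (∑ j ∈ J, F j) := by
  classical
  induction J using Finset.cons_induction with
  | empty => intro s; exact ⟨0, fun p q _ => by simp⟩
  | cons a J ha ih =>
    rw [Finset.sum_cons]
    exact (h a (Finset.mem_cons_self a J)).add
      (ih fun j hj => h j (Finset.mem_cons_of_mem hj))

lemma UB1.sum {ι : Type} (J : Finset ι) (F : ι → V3 W) (h : ∀ j ∈ J, UB1 (F j)) :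
    UB1 (∑ j ∈ J, F j) := by
  classical
  induction J using Finset.cons_induction with
  | empty => intro s; exact ⟨0, fun p q _ => by simp⟩
  | cons a J ha ih =>
    rw [Finset.sum_cons]
    exact (h a (Finset.mem_cons_self a J)).add
      (ih fun j hj => h j (Finset.mem_cons_of_mem hj))

/-! ### The residue operators -/

noncomputable def Pop (n : ℤ) (F : V3 W) : V2 W := fun q s =>
  ∑ᶠ i : ℕ, ((-1:ℂ)^i * ((Ring.choose n i : ℤ) : ℂ)) • F (n - i) (q + i) s

noncomputable def Qop (n : ℤ) (F : V3 W) : V2 W := fun q s =>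
  ∑ᶠ i : ℕ, ((-1:ℂ)^(n:ℤ) * ((-1:ℂ)^i * ((Ring.choose n i : ℤ) : ℂ))) • F i (q + n - i) s

lemma finsum_eq_range {M : Type} [AddCommMonoid M] {f : ℕ → M} {B : ℕ}
    (h : ∀ i, B ≤ i → f i = 0) : ∑ᶠ i, f i = ∑ i ∈ range B, f i := by
  apply finsum_eq_sum_of_support_subset
  intro i hi
  simp only [Function.mem_support] at hi
  simp only [Finset.coe_range, Set.mem_Iio]
  by_contra hmem
  exact hi (h i (by omega))

lemma UB2.popBound {F : V3 W} (hF : UB2 F) (q s : ℤ) :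
    ∃ B : ℕ, ∀ i : ℕ, B ≤ i → ∀ p : ℤ, F p (q + i) s = 0 := by
  obtain ⟨N, hN⟩ := hF s
  refine ⟨(N - q).toNat, fun i hi p => ?_⟩
  apply hN
  have : ((N - q).toNat : ℤ) ≤ (i : ℤ) := by exact_mod_cast hi
  omega

lemma UB1.qopBound {F : V3 W} (hF : UB1 F) (s : ℤ) :
    ∃ B : ℕ, ∀ i : ℕ, B ≤ i → ∀ q' : ℤ, F i q' s = 0 := by
  obtain ⟨N, hN⟩ := hF s
  refine ⟨N.toNat, fun i hi q' => ?_⟩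
  apply hN
  have : (N.toNat : ℤ) ≤ (i : ℤ) := by exact_mod_cast hi
  omega

lemma pop_eq_range (n : ℤ) (F : V3 W) (q s : ℤ) {B : ℕ}
    (h : ∀ i : ℕ, B ≤ i → ∀ p : ℤ, F p (q + i) s = 0) :
    Pop n F q s = ∑ i ∈ range B,
      ((-1:ℂ)^i * ((Ring.choose n i : ℤ) : ℂ)) • F (n - i) (q + i) s :=
  finsum_eq_range fun i hi => by rw [h i hi, smul_zero]

lemma qop_eq_range (n : ℤ) (F : V3 W) (q s : ℤ) {B : ℕ}
    (h : ∀ i : ℕ, B ≤ i → ∀ q' : ℤ, F i q' s = 0) :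
    Qop n F q s = ∑ i ∈ range B,
      ((-1:ℂ)^(n:ℤ) * ((-1:ℂ)^i * ((Ring.choose n i : ℤ) : ℂ))) • F i (q + n - i) s :=
  finsum_eq_range fun i hi => by rw [h i hi, smul_zero]

lemma pop_add (n : ℤ) {F G : V3 W} (hF : UB2 F) (hG : UB2 G) :
    Pop n (F + G) = Pop n F + Pop n G := by
  funext q s
  obtain ⟨B₁, h₁⟩ := hF.popBound q s
  obtain ⟨B₂, h₂⟩ := hG.popBound q s
  have hFG : ∀ i : ℕ, max B₁ B₂ ≤ i → ∀ p : ℤ, (F + G) p (q + i) s = 0 := by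
    intro i hi p
    show F p (q+i) s + G p (q+i) s = 0
    rw [h₁ i (le_trans (le_max_left _ _) hi) p, h₂ i (le_trans (le_max_right _ _) hi) p,
      add_zero]
  show Pop n (F + G) q s = Pop n F q s + Pop n G q s
  rw [pop_eq_range n _ q s hFG,
    pop_eq_range n F q s (fun i hi p => h₁ i (le_trans (le_max_left _ _) hi) p),
    pop_eq_range n G q s (fun i hi p => h₂ i (le_trans (le_max_right _ _) hi) p),
    ← Finset.sum_add_distrib]
  refine Finset.sum_congr rfl fun i _ => ?_
  show _ • (F _ _ _ + G _ _ _) = _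
  rw [smul_add]

lemma qop_add (n : ℤ) {F G : V3 W} (hF : UB1 F) (hG : UB1 G) :
    Qop n (F + G) = Qop n F + Qop n G := by
  funext q s
  obtain ⟨B₁, h₁⟩ := hF.qopBound s
  obtain ⟨B₂, h₂⟩ := hG.qopBound s
  have hFG : ∀ i : ℕ, max B₁ B₂ ≤ i → ∀ q' : ℤ, (F + G) i q' s = 0 := by
    intro i hi q'
    show F i q' s + G i q' s = 0
    rw [h₁ i (le_trans (le_max_left _ _) hi) q', h₂ i (le_trans (le_max_right _ _) hi) q',
      add_zero]
  show Qop n (F + G) q s = Qop n F q s + Qop n G q s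
  rw [qop_eq_range n _ q s hFG,
    qop_eq_range n F q s (fun i hi q' => h₁ i (le_trans (le_max_left _ _) hi) q'),
    qop_eq_range n G q s (fun i hi q' => h₂ i (le_trans (le_max_right _ _) hi) q'),
    ← Finset.sum_add_distrib]
  refine Finset.sum_congr rfl fun i _ => ?_
  show _ • (F _ _ _ + G _ _ _) = _
  rw [smul_add]

lemma pop_smul (n : ℤ) (c : ℂ) (F : V3 W) : Pop n (c • F) = c • Pop n F := by
  funext q s
  show (∑ᶠ i : ℕ, _ • (c • F) (n - i) (q + i) s) = c • ∑ᶠ i : ℕ, _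
  rw [smul_finsum]
  apply finsum_congr
  intro i
  show _ • (c • F (n-i) (q+i) s) = c • _
  rw [smul_comm]

lemma qop_smul (n : ℤ) (c : ℂ) (F : V3 W) : Qop n (c • F) = c • Qop n F := by
  funext q s
  show (∑ᶠ i : ℕ, _ • (c • F) i (q + n - i) s) = c • ∑ᶠ i : ℕ, _
  rw [smul_finsum]
  apply finsum_congr
  intro i
  show _ • (c • F i (q + n - i) s) = c • _
  rw [smul_comm]

lemma pop_sum (n : ℤ) {ι : Type} (J : Finset ι) (c : ι → ℂ) (F : ι → V3 W)
    (h : ∀ j ∈ J, UB2 (F j)) :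
    Pop n (∑ j ∈ J, c j • F j) = ∑ j ∈ J, c j • Pop n (F j) := by
  classical
  induction J using Finset.cons_induction with
  | empty => funext q s; simp [Pop]
  | cons a J ha ih =>
    rw [Finset.sum_cons, Finset.sum_cons,
      pop_add n ((h a (Finset.mem_cons_self a J)).smul (c a))
        (UB2.sum J _ fun j hj => (h j (Finset.mem_cons_of_mem hj)).smul (c j)),
      pop_smul, ih fun j hj => h j (Finset.mem_cons_of_mem hj)]

lemma qop_sum (n : ℤ) {ι : Type} (J : Finset ι) (c : ι → ℂ) (F : ι → V3 W)
    (h : ∀ j ∈ J, UB1 (F j)) :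
    Qop n (∑ j ∈ J, c j • F j) = ∑ j ∈ J, c j • Qop n (F j) := by
  classical
  induction J using Finset.cons_induction with
  | empty => funext q s; simp [Qop]
  | cons a J ha ih =>
    rw [Finset.sum_cons, Finset.sum_cons,
      qop_add n ((h a (Finset.mem_cons_self a J)).smul (c a))
        (UB1.sum J _ fun j hj => (h j (Finset.mem_cons_of_mem hj)).smul (c j)),
      qop_smul, ih fun j hj => h j (Finset.mem_cons_of_mem hj)]

lemma pop_sQ (n : ℤ) {F : V3 W} (hF : UB2 F) : sQ (Pop n F) = Pop n (tBC F) := by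
  funext q s
  obtain ⟨B₁, h₁⟩ := hF.popBound (q+1) s
  obtain ⟨B₂, h₂⟩ := (hF.tBC).popBound q s
  obtain ⟨B₃, h₃⟩ := hF.popBound q (s+1)
  set B := B₁ + B₂ + B₃ with hB
  show Pop n F (q+1) s - Pop n F q (s+1) = Pop n (tBC F) q s
  rw [pop_eq_range n F (q+1) s (B := B) (fun i hi p => h₁ i (by omega) p),
    pop_eq_range n F q (s+1) (B := B) (fun i hi p => h₃ i (by omega) p),
    pop_eq_range n (tBC F) q s (B := B) (fun i hi p => h₂ i (by omega) p),
    ← Finset.sum_sub_distrib]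
  refine Finset.sum_congr rfl fun i _ => ?_
  rw [← smul_sub]
  congr 1
  show F (n - i) (q+1+i) s - F (n-i) (q+i) (s+1)
      = F (n-i) (q+i+1) s - F (n-i) (q+i) (s+1)
  have h : q + 1 + (i:ℤ) = q + i + 1 := by ring
  rw [h]

lemma qop_sQ (n : ℤ) {F : V3 W} (hF : UB1 F) : sQ (Qop n F) = Qop n (tBC F) := by
  funext q s
  obtain ⟨B₁, h₁⟩ := hF.qopBound s
  obtain ⟨B₂, h₂⟩ := (hF.tBC).qopBound s
  obtain ⟨B₃, h₃⟩ := hF.qopBound (s+1)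
  set B := B₁ + B₂ + B₃ with hB
  show Qop n F (q+1) s - Qop n F q (s+1) = Qop n (tBC F) q s
  rw [qop_eq_range n F (q+1) s (B := B) (fun i hi q' => h₁ i (by omega) q'),
    qop_eq_range n F q (s+1) (B := B) (fun i hi q' => h₃ i (by omega) q'),
    qop_eq_range n (tBC F) q s (B := B) (fun i hi q' => h₂ i (by omega) q'),
    ← Finset.sum_sub_distrib]
  refine Finset.sum_congr rfl fun i _ => ?_
  rw [← smul_sub]
  congr 1
  show F i (q+1+n-i) s - F i (q+n-i) (s+1)
      = F i (q+n-i+1) s - F i (q+n-i) (s+1)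
  have h : q + 1 + n - (i:ℤ) = q + n - i + 1 := by ring
  rw [h]

lemma pop_sQ_pow (n : ℤ) : ∀ (j : ℕ) (F : V3 W), UB2 F →
    (sQ ^ j) (Pop n F) = Pop n ((tBC ^ j) F) := by
  intro j
  induction j with
  | zero => intro F _; simp
  | succ j ih =>
    intro F hF
    rw [pow_succ, pow_succ, Module.End.mul_apply, Module.End.mul_apply, pop_sQ n hF,
      ih _ hF.tBC]

lemma qop_sQ_pow (n : ℤ) : ∀ (j : ℕ) (F : V3 W), UB1 F →
    (sQ ^ j) (Qop n F) = Qop n ((tBC ^ j) F) := by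
  intro j
  induction j with
  | zero => intro F _; simp
  | succ j ih =>
    intro F hF
    rw [pow_succ, pow_succ, Module.End.mul_apply, Module.End.mul_apply, qop_sQ n hF,
      ih _ hF.tBC]

lemma choose_cast_pascal (n : ℤ) (i : ℕ) :
    ((Ring.choose (n+1) (i+1) : ℤ) : ℂ)
      = ((Ring.choose n i : ℤ) : ℂ) + ((Ring.choose n (i+1) : ℤ) : ℂ) := by
  rw [Ring.choose_succ_succ]
  push_cast
  ring

lemma choose_cast_zero (n : ℤ) :
    ((Ring.choose (n+1) 0 : ℤ) : ℂ) = ((Ring.choose n 0 : ℤ) : ℂ) := by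
  rw [Ring.choose_zero_right, Ring.choose_zero_right]

lemma pop_tAB (n : ℤ) {F : V3 W} (hF : UB2 F) : Pop n (tAB F) = Pop (n+1) F := by
  funext q s
  obtain ⟨B, hBnd⟩ := hF.popBound q s
  have h1 : ∀ i : ℕ, B ≤ i → ∀ p : ℤ, (tAB F) p (q + i) s = 0 := by
    intro i hi p
    show F (p+1) (q+i) s - F p (q+i+1) s = 0
    have e : q + (i:ℤ) + 1 = q + ((i+1 : ℕ) : ℤ) := by push_cast; ring
    rw [hBnd i hi, e, hBnd (i+1) (by omega), sub_zero]
  have h2 : ∀ i : ℕ, B + 1 ≤ i → ∀ p : ℤ, F p (q + i) s = 0 := fun i hi p =>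
    hBnd i (by omega) p
  rw [pop_eq_range n (tAB F) q s (B := B) h1, pop_eq_range (n+1) F q s (B := B+1) h2]
  have key : (∑ i ∈ range (B+1),
        (((-1:ℂ)^i) * ((Ring.choose (n+1) i : ℤ) : ℂ)) • F (n + 1 - i) (q + i) s)
      = ∑ i ∈ range B, (((-1:ℂ)^i) * ((Ring.choose n i : ℤ) : ℂ)) •
          (F (n + 1 - i) (q + i) s - F (n + 1 - ((i+1:ℕ):ℤ)) (q + ((i+1:ℕ):ℤ)) s) :=
    telescope_pascal _ _ (choose_cast_zero n) (fun i => choose_cast_pascal n i)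
      (fun i => F (n + 1 - i) (q + i) s) B
      (by show ((Ring.choose n B : ℤ) : ℂ) • F (n + 1 - (B:ℤ)) (q + (B:ℤ)) s = 0
          rw [hBnd B le_rfl, smul_zero])
  rw [key]
  refine Finset.sum_congr rfl fun i hi => ?_
  show ((-1:ℂ)^i * ((Ring.choose n i : ℤ) : ℂ)) •
      (F (n - i + 1) (q + i) s - F (n - i) (q + i + 1) s) = _
  have e1 : n - (i:ℤ) + 1 = n + 1 - (i:ℤ) := by ring
  have e2 : n - (i:ℤ) = n + 1 - (((i+1:ℕ)):ℤ) := by push_cast; ring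
  have e3 : q + (i:ℤ) + 1 = q + (((i+1:ℕ)):ℤ) := by push_cast; ring
  rw [e1, e2, e3]

lemma qop_tAB (n : ℤ) {F : V3 W} (hF : UB1 F) : Qop n (tAB F) = Qop (n+1) F := by
  funext q s
  obtain ⟨B, hBnd⟩ := hF.qopBound s
  have h1 : ∀ i : ℕ, B ≤ i → ∀ q' : ℤ, (tAB F) i q' s = 0 := by
    intro i hi q'
    show F ((i:ℤ)+1) q' s - F i (q'+1) s = 0
    have e : ((i:ℤ)+1) = ((i+1:ℕ):ℤ) := by push_cast; ring
    rw [e, hBnd (i+1) (by omega), hBnd i hi, sub_zero]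
  have h2 : ∀ i : ℕ, B + 1 ≤ i → ∀ q' : ℤ, F i q' s = 0 := fun i hi => hBnd i (by omega)
  have zp : ((-1:ℂ)^((n+1):ℤ)) = -((-1:ℂ)^(n:ℤ)) := by
    rw [zpow_add_one₀ (by norm_num : (-1:ℂ) ≠ 0)]
    ring
  have key : (∑ i ∈ range (B+1),
        (((-1:ℂ)^i) * ((Ring.choose (n+1) i : ℤ) : ℂ)) • F i (q + (n+1) - i) s)
      = ∑ i ∈ range B, (((-1:ℂ)^i) * ((Ring.choose n i : ℤ) : ℂ)) •
          (F i (q + (n+1) - i) s - F (i+1) (q + (n+1) - ((i+1:ℕ):ℤ)) s) :=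
    telescope_pascal _ _ (choose_cast_zero n) (fun i => choose_cast_pascal n i)
      (fun i => F i (q + (n+1) - i) s) B
      (by show ((Ring.choose n B : ℤ) : ℂ) • F (B:ℤ) (q + (n+1) - (B:ℤ)) s = 0
          rw [hBnd B le_rfl, smul_zero])
  rw [qop_eq_range n (tAB F) q s (B := B) h1, qop_eq_range (n+1) F q s (B := B+1) h2]
  have rhs_eq : (∑ i ∈ range (B+1), (((-1:ℂ)^((n+1):ℤ)) *
        (((-1:ℂ)^i) * ((Ring.choose (n+1) i : ℤ) : ℂ))) • F i (q + (n+1) - i) s)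
      = (-1:ℂ)^(n:ℤ) • - ∑ i ∈ range (B+1),
          (((-1:ℂ)^i) * ((Ring.choose (n+1) i : ℤ) : ℂ)) • F i (q + (n+1) - i) s := by
    rw [smul_neg, Finset.smul_sum, ← Finset.sum_neg_distrib]
    refine Finset.sum_congr rfl fun i _ => ?_
    rw [zp, neg_mul, neg_smul, mul_smul]
  rw [rhs_eq, key]
  rw [← Finset.sum_neg_distrib, Finset.smul_sum]
  refine Finset.sum_congr rfl fun i hi => ?_
  show ((-1:ℂ)^(n:ℤ) * (((-1:ℂ)^i) * ((Ring.choose n i : ℤ) : ℂ))) •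
      (F ((i:ℤ)+1) (q + n - i) s - F i (q + n - i + 1) s) = _
  rw [mul_smul]
  congr 1
  rw [← smul_neg, neg_sub]
  congr 1
  have e1 : ((i:ℤ)+1) = ((i+1:ℕ):ℤ) := by push_cast; ring
  have e2 : q + n - (i:ℤ) = q + (n+1) - (((i+1:ℕ)):ℤ) := by push_cast; ring
  have e3 : q + n - (i:ℤ) + 1 = q + (n+1) - (i:ℤ) := by ring
  rw [e3, e2, e1]

lemma pop_tAB_pow (n : ℤ) : ∀ (j : ℕ) (F : V3 W), UB2 F →
    Pop n ((tAB ^ j) F) = Pop (n + j) F := by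
  intro j
  induction j with
  | zero => intro F _; simp
  | succ j ih =>
    intro F hF
    rw [pow_succ, Module.End.mul_apply, ih _ hF.tAB, pop_tAB _ hF]
    congr 1
    push_cast
    ring

lemma qop_tAB_pow (n : ℤ) : ∀ (j : ℕ) (F : V3 W), UB1 F →
    Qop n ((tAB ^ j) F) = Qop (n + j) F := by
  intro j
  induction j with
  | zero => intro F _; simp
  | succ j ih =>
    intro F hF
    rw [pow_succ, Module.End.mul_apply, ih _ hF.tAB, qop_tAB _ hF]
    congr 1
    push_cast
    ring

lemma pop_eq_qop (d : ℕ) (F : V3 W) : Pop (d : ℤ) F = Qop (d : ℤ) F := by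
  funext q s
  have hch : ∀ i : ℕ, (Ring.choose ((d:ℕ) : ℤ) i) = ((d.choose i : ℕ) : ℤ) := fun i =>
    Ring.choose_natCast d i
  have h1 : ∀ i : ℕ, d + 1 ≤ i →
      ((-1:ℂ)^i * ((Ring.choose ((d:ℕ):ℤ) i : ℤ) : ℂ)) • F ((d:ℤ) - i) (q + i) s = 0 := by
    intro i hi
    rw [hch i, Nat.choose_eq_zero_of_lt (by omega)]
    simp
  have h2 : ∀ i : ℕ, d + 1 ≤ i →
      ((-1:ℂ)^(((d:ℕ):ℤ)) * ((-1:ℂ)^i * ((Ring.choose ((d:ℕ):ℤ) i : ℤ) : ℂ))) •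
        F i (q + d - i) s = 0 := by
    intro i hi
    rw [hch i, Nat.choose_eq_zero_of_lt (by omega)]
    simp
  show (∑ᶠ i : ℕ, _) = (∑ᶠ i : ℕ, _)
  rw [finsum_eq_range h1, finsum_eq_range h2]
  rw [← Finset.sum_range_reflect]
  refine Finset.sum_congr rfl fun i hi => ?_
  rw [Finset.mem_range] at hi
  have hi' : i ≤ d := by omega
  have ed : d + 1 - 1 - i = d - i := by omega
  rw [ed]
  have hcc : ((Ring.choose ((d:ℕ):ℤ) (d - i) : ℤ) : ℂ) = ((Ring.choose ((d:ℕ):ℤ) i : ℤ) : ℂ) := by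
    rw [hch, hch, Nat.choose_symm hi']
  have hzp : ((-1:ℂ)^(((d:ℕ):ℤ))) = (-1:ℂ)^(d:ℕ) := by
    rw [zpow_natCast]
  have hpow : (-1:ℂ)^(d - i) = (-1:ℂ)^(d:ℕ) * (-1:ℂ)^i := by
    have h := pow_sub_mul_pow (-1:ℂ) hi'
    have h2 : ((-1:ℂ)^(d-i) * (-1:ℂ)^i) * (-1:ℂ)^i = (-1:ℂ)^(d:ℕ) * (-1:ℂ)^i := by
      rw [h]
    rw [mul_assoc, ← mul_pow] at h2
    norm_num at h2
    exact h2
  have e1 : (d:ℤ) - ((d - i : ℕ) : ℤ) = (i : ℤ) := by omega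
  have e2 : q + ((d - i : ℕ) : ℤ) = q + (d:ℤ) - (i:ℤ) := by omega
  rw [hcc, e1, e2, hzp, hpow]
  ring_nf

lemma comm_apply {t u : Module.End ℂ (V3 W)} (h : Commute t u) (j k : ℕ) (F : V3 W) :
    (t ^ j) ((u ^ k) F) = (u ^ k) ((t ^ j) F) := by
  rw [← Module.End.mul_apply, ← Module.End.mul_apply, (h.pow_pow j k).eq]

lemma loc_pow_ext {t : Module.End ℂ (V3 W)} {k r : ℕ} (hkr : k ≤ r) {F G : V3 W}
    (h : (t ^ k) F = (t ^ k) G) : (t ^ r) F = (t ^ r) G := by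
  have e : t ^ r = t ^ (r - k) * t ^ k := by
    rw [← pow_add]
    congr 1
    omega
  rw [e, Module.End.mul_apply, Module.End.mul_apply, h]

/-! ### The six compositions -/

def E1 (a b c : ℤ → W →ₗ[ℂ] W) (w : W) : V3 W := fun p q s => a p (b q (c s w))
def E2 (a b c : ℤ → W →ₗ[ℂ] W) (w : W) : V3 W := fun p q s => b q (a p (c s w))
def E3 (a b c : ℤ → W →ₗ[ℂ] W) (w : W) : V3 W := fun p q s => c s (a p (b q w))
def E4 (a b c : ℤ → W →ₗ[ℂ] W) (w : W) : V3 W := fun p q s => c s (b q (a p w))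
def E5 (a b c : ℤ → W →ₗ[ℂ] W) (w : W) : V3 W := fun p q s => a p (c s (b q w))
def E6 (a b c : ℤ → W →ₗ[ℂ] W) (w : W) : V3 W := fun p q s => b q (c s (a p w))

section Fields

variable (a b c : ℤ → W →ₗ[ℂ] W) (w : W)

lemma ub2_E1 (hb : FieldTrunc b) : UB2 (E1 a b c w) := by
  intro s
  obtain ⟨N, hN⟩ := hb (c s w)
  exact ⟨N, fun p q hq => by show a p (b q (c s w)) = 0; rw [hN q hq, map_zero]⟩

lemma ub1_E2 (ha : FieldTrunc a) : UB1 (E2 a b c w) := by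
  intro s
  obtain ⟨N, hN⟩ := ha (c s w)
  exact ⟨N, fun p q hp => by show b q (a p (c s w)) = 0; rw [hN p hp, map_zero]⟩

lemma ub2_E3 (hb : FieldTrunc b) : UB2 (E3 a b c w) := by
  intro s
  obtain ⟨N, hN⟩ := hb w
  exact ⟨N, fun p q hq => by show c s (a p (b q w)) = 0; rw [hN q hq, map_zero, map_zero]⟩

lemma ub1_E4 (ha : FieldTrunc a) : UB1 (E4 a b c w) := by
  intro s
  obtain ⟨N, hN⟩ := ha w
  exact ⟨N, fun p q hp => by show c s (b q (a p w)) = 0; rw [hN p hp, map_zero, map_zero]⟩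

variable {a b c}

lemma locAB_12 {kab r : ℕ} (hkr : kab ≤ r)
    (hab : ∀ m n : ℤ, ∀ x : W,
      (∑ i ∈ Finset.range (kab + 1), ((-1 : ℂ) ^ i * (kab.choose i : ℂ)) •
        a (m + kab - i) (b (n + i) x)) =
      ∑ i ∈ Finset.range (kab + 1), ((-1 : ℂ) ^ i * (kab.choose i : ℂ)) •
        b (n + i) (a (m + kab - i) x)) :
    (tAB ^ r) (E1 a b c w) = (tAB ^ r) (E2 a b c w) := by
  refine loc_pow_ext hkr ?_
  funext p q s
  rw [tAB_pow_apply, tAB_pow_apply]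
  simpa [E1, E2] using hab p q (c s w)

lemma locAB_34 {kab r : ℕ} (hkr : kab ≤ r)
    (hab : ∀ m n : ℤ, ∀ x : W,
      (∑ i ∈ Finset.range (kab + 1), ((-1 : ℂ) ^ i * (kab.choose i : ℂ)) •
        a (m + kab - i) (b (n + i) x)) =
      ∑ i ∈ Finset.range (kab + 1), ((-1 : ℂ) ^ i * (kab.choose i : ℂ)) •
        b (n + i) (a (m + kab - i) x)) :
    (tAB ^ r) (E3 a b c w) = (tAB ^ r) (E4 a b c w) := by
  refine loc_pow_ext hkr ?_
  funext p q s
  rw [tAB_pow_apply, tAB_pow_apply]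
  have h := congrArg (c s) (hab p q w)
  simpa [E3, E4, map_sum, map_smul] using h

lemma locBC_15 {kbc r : ℕ} (hkr : kbc ≤ r)
    (hbc : ∀ m n : ℤ, ∀ x : W,
      (∑ i ∈ Finset.range (kbc + 1), ((-1 : ℂ) ^ i * (kbc.choose i : ℂ)) •
        b (m + kbc - i) (c (n + i) x)) =
      ∑ i ∈ Finset.range (kbc + 1), ((-1 : ℂ) ^ i * (kbc.choose i : ℂ)) •
        c (n + i) (b (m + kbc - i) x)) :
    (tBC ^ r) (E1 a b c w) = (tBC ^ r) (E5 a b c w) := by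
  refine loc_pow_ext hkr ?_
  funext p q s
  rw [tBC_pow_apply, tBC_pow_apply]
  have h := congrArg (a p) (hbc q s w)
  simpa [E1, E5, map_sum, map_smul] using h

lemma locBC_64 {kbc r : ℕ} (hkr : kbc ≤ r)
    (hbc : ∀ m n : ℤ, ∀ x : W,
      (∑ i ∈ Finset.range (kbc + 1), ((-1 : ℂ) ^ i * (kbc.choose i : ℂ)) •
        b (m + kbc - i) (c (n + i) x)) =
      ∑ i ∈ Finset.range (kbc + 1), ((-1 : ℂ) ^ i * (kbc.choose i : ℂ)) •
        c (n + i) (b (m + kbc - i) x)) :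
    (tBC ^ r) (E6 a b c w) = (tBC ^ r) (E4 a b c w) := by
  refine loc_pow_ext hkr ?_
  funext p q s
  rw [tBC_pow_apply, tBC_pow_apply]
  simpa [E6, E4] using hbc q s (a p w)

lemma locAC_53 {kac r : ℕ} (hkr : kac ≤ r)
    (hac : ∀ m n : ℤ, ∀ x : W,
      (∑ i ∈ Finset.range (kac + 1), ((-1 : ℂ) ^ i * (kac.choose i : ℂ)) •
        a (m + kac - i) (c (n + i) x)) =
      ∑ i ∈ Finset.range (kac + 1), ((-1 : ℂ) ^ i * (kac.choose i : ℂ)) •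
        c (n + i) (a (m + kac - i) x)) :
    (tAC ^ r) (E5 a b c w) = (tAC ^ r) (E3 a b c w) := by
  refine loc_pow_ext hkr ?_
  funext p q s
  rw [tAC_pow_apply, tAC_pow_apply]
  simpa [E5, E3] using hac p s (b q w)

lemma locAC_26 {kac r : ℕ} (hkr : kac ≤ r)
    (hac : ∀ m n : ℤ, ∀ x : W,
      (∑ i ∈ Finset.range (kac + 1), ((-1 : ℂ) ^ i * (kac.choose i : ℂ)) •
        a (m + kac - i) (c (n + i) x)) =
      ∑ i ∈ Finset.range (kac + 1), ((-1 : ℂ) ^ i * (kac.choose i : ℂ)) •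
        c (n + i) (a (m + kac - i) x)) :
    (tAC ^ r) (E2 a b c w) = (tAC ^ r) (E6 a b c w) := by
  refine loc_pow_ext hkr ?_
  funext p q s
  rw [tAC_pow_apply, tAC_pow_apply]
  have h := congrArg (b q) (hac p s w)
  simpa [E2, E6, map_sum, map_smul] using h

end Fields

section Decomp

variable {a b c : ℤ → W →ₗ[ℂ] W} (w : W)

lemma G1_eq (n : ℤ) (ha : FieldTrunc a) (hb : FieldTrunc b) :
    (fun q s => nthProd a b n q (c s w)) = Pop n (E1 a b c w) - Qop n (E2 a b c w) := by
  funext q s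
  obtain ⟨Nb, hNb⟩ := hb (c s w)
  obtain ⟨Na, hNa⟩ := ha (c s w)
  have key1 : ∀ i : ℕ, (Nb - q).toNat + Na.toNat ≤ i → Nb ≤ q + (i:ℤ) := by
    intro i hi
    have h' : (((Nb - q).toNat + Na.toNat : ℕ) : ℤ) ≤ (i:ℤ) := by exact_mod_cast hi
    push_cast at h'
    omega
  have key2 : ∀ i : ℕ, (Nb - q).toNat + Na.toNat ≤ i → Na ≤ (i:ℤ) := by
    intro i hi
    have h' : (((Nb - q).toNat + Na.toNat : ℕ) : ℤ) ≤ (i:ℤ) := by exact_mod_cast hi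
    push_cast at h'
    omega
  have hvan : ∀ i : ℕ, (Nb - q).toNat + Na.toNat ≤ i →
      ((-1 : ℂ) ^ i * ((Ring.choose n i : ℤ) : ℂ)) •
        (a (n - i) (b (q + i) (c s w))
          - ((-1 : ℂ) ^ n) • b (q + n - i) (a i (c s w))) = 0 := by
    intro i hi
    rw [hNb _ (key1 i hi), hNa _ (key2 i hi)]
    simp
  have hv1 : ∀ i : ℕ, (Nb - q).toNat + Na.toNat ≤ i → ∀ p : ℤ,
      E1 a b c w p (q + i) s = 0 := by
    intro i hi p
    show a p (b (q + i) (c s w)) = 0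
    rw [hNb _ (key1 i hi), map_zero]
  have hv2 : ∀ i : ℕ, (Nb - q).toNat + Na.toNat ≤ i → ∀ q' : ℤ,
      E2 a b c w i q' s = 0 := by
    intro i hi q'
    show b q' (a i (c s w)) = 0
    rw [hNa _ (key2 i hi), map_zero]
  show nthProd a b n q (c s w) = Pop n (E1 a b c w) q s - Qop n (E2 a b c w) q s
  rw [nthProd, finsum_eq_range hvan, pop_eq_range n _ q s hv1, qop_eq_range n _ q s hv2,
    ← Finset.sum_sub_distrib]
  refine Finset.sum_congr rfl fun i _ => ?_
  rw [smul_sub]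
  congr 1
  rw [smul_smul]
  show (((-1:ℂ)^i * ((Ring.choose n i : ℤ):ℂ)) * ((-1:ℂ)^n)) • b (q + n - i) (a i (c s w))
      = _ • b (q + n - i) (a i (c s w))
  congr 1
  ring

lemma G2_eq (n : ℤ) (ha : FieldTrunc a) (hb : FieldTrunc b) :
    (fun q s => c s (nthProd a b n q w)) = Pop n (E3 a b c w) - Qop n (E4 a b c w) := by
  funext q s
  obtain ⟨Nb, hNb⟩ := hb w
  obtain ⟨Na, hNa⟩ := ha w
  have key1 : ∀ i : ℕ, (Nb - q).toNat + Na.toNat ≤ i → Nb ≤ q + (i:ℤ) := by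
    intro i hi
    have h' : (((Nb - q).toNat + Na.toNat : ℕ) : ℤ) ≤ (i:ℤ) := by exact_mod_cast hi
    push_cast at h'
    omega
  have key2 : ∀ i : ℕ, (Nb - q).toNat + Na.toNat ≤ i → Na ≤ (i:ℤ) := by
    intro i hi
    have h' : (((Nb - q).toNat + Na.toNat : ℕ) : ℤ) ≤ (i:ℤ) := by exact_mod_cast hi
    push_cast at h'
    omega
  have hvan : ∀ i : ℕ, (Nb - q).toNat + Na.toNat ≤ i →
      ((-1 : ℂ) ^ i * ((Ring.choose n i : ℤ) : ℂ)) •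
        (a (n - i) (b (q + i) w)
          - ((-1 : ℂ) ^ n) • b (q + n - i) (a i w)) = 0 := by
    intro i hi
    rw [hNb _ (key1 i hi), hNa _ (key2 i hi)]
    simp
  have hv1 : ∀ i : ℕ, (Nb - q).toNat + Na.toNat ≤ i → ∀ p : ℤ,
      E3 a b c w p (q + i) s = 0 := by
    intro i hi p
    show c s (a p (b (q + i) w)) = 0
    rw [hNb _ (key1 i hi), map_zero, map_zero]
  have hv2 : ∀ i : ℕ, (Nb - q).toNat + Na.toNat ≤ i → ∀ q' : ℤ,
      E4 a b c w i q' s = 0 := by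
    intro i hi q'
    show c s (b q' (a i w)) = 0
    rw [hNa _ (key2 i hi), map_zero, map_zero]
  show c s (nthProd a b n q w) = Pop n (E3 a b c w) q s - Qop n (E4 a b c w) q s
  rw [nthProd, finsum_eq_range hvan, map_sum, pop_eq_range n _ q s hv1,
    qop_eq_range n _ q s hv2, ← Finset.sum_sub_distrib]
  refine Finset.sum_congr rfl fun i _ => ?_
  rw [map_smul, map_sub, map_smul, smul_sub]
  congr 1
  rw [smul_smul]
  show (((-1:ℂ)^i * ((Ring.choose n i : ℤ):ℂ)) * ((-1:ℂ)^n)) • c s (b (q + n - i) (a i w))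
      = _ • c s (b (q + n - i) (a i w))
  congr 1
  ring

end Decomp

end DongAux

open DongAux

/-- Dong's Lemma: if `a`, `b`, `c` are pairwise mutually local
fields on `W`, then for every `n ∈ ℤ` the field `a(z)_n b(z)` is mutually local
with `c(z)`. -/
theorem dong_lemma (a b c : ℤ → W →ₗ[ℂ] W)
    (ha : FieldTrunc a) (hb : FieldTrunc b) (hc : FieldTrunc c)
    (hab : MutLocal a b) (hac : MutLocal a c) (hbc : MutLocal b c) (n : ℤ) :
    ∃ k : ℕ, ∀ m l : ℤ, ∀ w : W,
      (∑ i ∈ Finset.range (k + 1), ((-1 : ℂ) ^ i * (k.choose i : ℂ)) •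
        nthProd a b n (m + k - i) (c (l + i) w)) =
      ∑ i ∈ Finset.range (k + 1), ((-1 : ℂ) ^ i * (k.choose i : ℂ)) •
        c (l + i) (nthProd a b n (m + k - i) w) := by
  classical
  obtain ⟨kab, hab'⟩ := hab
  obtain ⟨kac, hac'⟩ := hac
  obtain ⟨kbc, hbc'⟩ := hbc
  set r : ℕ := max (max kab kac) kbc with hr
  have hkab : kab ≤ r := le_trans (le_max_left _ _) (le_max_left _ _)
  have hkac : kac ≤ r := le_trans (le_max_right _ _) (le_max_left _ _)
  have hkbc : kbc ≤ r := le_max_right _ _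
  set M : ℕ := ((r:ℤ) - n).toNat + r with hM
  refine ⟨M + r, ?_⟩
  intro m l w
  set K : ℕ := M + r with hK
  have hU1 := ub2_E1 a b c w hb
  have hU2 := ub1_E2 a b c w ha
  have hU3 := ub2_E3 a b c w hb
  have hU4 := ub1_E4 a b c w ha
  have L1 : (tAB ^ r) (E1 a b c w) = (tAB ^ r) (E2 a b c w) := locAB_12 w hkab hab'
  have L2 : (tAB ^ r) (E3 a b c w) = (tAB ^ r) (E4 a b c w) := locAB_34 w hkab hab'
  have L3 : (tBC ^ r) (E1 a b c w) = (tBC ^ r) (E5 a b c w) := locBC_15 w hkbc hbc'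
  have L4 : (tBC ^ r) (E6 a b c w) = (tBC ^ r) (E4 a b c w) := locBC_64 w hkbc hbc'
  have L5 : (tAC ^ r) (E5 a b c w) = (tAC ^ r) (E3 a b c w) := locAC_53 w hkac hac'
  have L6 : (tAC ^ r) (E2 a b c w) = (tAC ^ r) (E6 a b c w) := locAC_26 w hkac hac'
  have H3' : (tAC ^ r) ((tBC ^ r) (E1 a b c w)) = (tAC ^ r) ((tBC ^ r) (E3 a b c w)) := by
    rw [L3, comm_apply commute_tAC_tBC r r, L5, comm_apply commute_tAC_tBC r r]
  have H4' : (tAC ^ r) ((tBC ^ r) (E2 a b c w)) = (tAC ^ r) ((tBC ^ r) (E4 a b c w)) := by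
    rw [comm_apply commute_tAC_tBC r r, L6, ← comm_apply commute_tAC_tBC r r, L4]
  have e1 : (∑ i ∈ Finset.range (K + 1), ((-1 : ℂ) ^ i * (K.choose i : ℂ)) •
        nthProd a b n (m + K - i) (c (l + i) w))
      = (sQ ^ K) (fun q s => nthProd a b n q (c s w)) m l :=
    (sQ_pow_apply K (fun q s => nthProd a b n q (c s w)) m l).symm
  have e2 : (∑ i ∈ Finset.range (K + 1), ((-1 : ℂ) ^ i * (K.choose i : ℂ)) •
        c (l + i) (nthProd a b n (m + K - i) w))
      = (sQ ^ K) (fun q s => c s (nthProd a b n q w)) m l :=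
    (sQ_pow_apply K (fun q s => c s (nthProd a b n q w)) m l).symm
  rw [e1, e2]
  suffices h : (sQ ^ K) (fun q s => nthProd a b n q (c s w))
      = (sQ ^ K) (fun q s => c s (nthProd a b n q w)) by rw [h]
  rw [G1_eq w n ha hb, G2_eq w n ha hb, map_sub, map_sub,
    pop_sQ_pow n K _ hU1, qop_sQ_pow n K _ hU2, pop_sQ_pow n K _ hU3, qop_sQ_pow n K _ hU4]
  have hm : (tBC (W := W)) ^ M = ∑ i ∈ Finset.range (M+1),
      ((-1:ℂ)^i * (M.choose i : ℂ)) • ((tAB ^ i) * (tAC ^ (M-i))) := by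
    rw [tBC_eq]
    exact sub_pow_expand (tAC (W := W)) (tAB (W := W)) commute_tAB_tAC.symm M
  have hsplit : ∀ E : V3 W, (tBC ^ K) E = ∑ i ∈ Finset.range (M+1),
      ((-1:ℂ)^i * (M.choose i : ℂ)) • ((tAB ^ i) ((tAC ^ (M - i)) ((tBC ^ r) E))) := by
    intro E
    rw [hK, pow_add, Module.End.mul_apply, hm, LinearMap.sum_apply]
    refine Finset.sum_congr rfl fun i _ => ?_
    rw [LinearMap.smul_apply, Module.End.mul_apply]
  have hUB1i : ∀ i : ℕ, UB2 ((tAC ^ (M-i)) ((tBC ^ r) (E1 a b c w))) := fun i =>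
    UB2.powt (fun G hG => hG.tAC) _ _ (UB2.powt (fun G hG => hG.tBC) _ _ hU1)
  have hUB2i : ∀ i : ℕ, UB1 ((tAC ^ (M-i)) ((tBC ^ r) (E2 a b c w))) := fun i =>
    UB1.powt (fun G hG => hG.tAC) _ _ (UB1.powt (fun G hG => hG.tBC) _ _ hU2)
  have hUB3i : ∀ i : ℕ, UB2 ((tAC ^ (M-i)) ((tBC ^ r) (E3 a b c w))) := fun i =>
    UB2.powt (fun G hG => hG.tAC) _ _ (UB2.powt (fun G hG => hG.tBC) _ _ hU3)
  have hUB4i : ∀ i : ℕ, UB1 ((tAC ^ (M-i)) ((tBC ^ r) (E4 a b c w))) := fun i =>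
    UB1.powt (fun G hG => hG.tAC) _ _ (UB1.powt (fun G hG => hG.tBC) _ _ hU4)
  rw [hsplit (E1 a b c w), hsplit (E2 a b c w), hsplit (E3 a b c w), hsplit (E4 a b c w),
    pop_sum n _ _ _ (fun j _ => UB2.powt (fun G hG => hG.tAB) _ _ (hUB1i j)),
    qop_sum n _ _ _ (fun j _ => UB1.powt (fun G hG => hG.tAB) _ _ (hUB2i j)),
    pop_sum n _ _ _ (fun j _ => UB2.powt (fun G hG => hG.tAB) _ _ (hUB3i j)),
    qop_sum n _ _ _ (fun j _ => UB1.powt (fun G hG => hG.tAB) _ _ (hUB4i j)),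
    ← Finset.sum_sub_distrib, ← Finset.sum_sub_distrib]
  refine Finset.sum_congr rfl fun i hi => ?_
  rw [← smul_sub, ← smul_sub]
  congr 1
  rw [pop_tAB_pow n i _ (hUB1i i), qop_tAB_pow n i _ (hUB2i i),
    pop_tAB_pow n i _ (hUB3i i), qop_tAB_pow n i _ (hUB4i i)]
  rw [Finset.mem_range] at hi
  have hMr : M = ((r:ℤ) - n).toNat + r := hM
  by_cases hir : i ≤ M - r
  · have hsp : (tAC (W := W)) ^ (M - i) = tAC ^ (M - i - r) * tAC ^ r := by
      rw [← pow_add]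
      congr 1
      omega
    have k13 : (tAC ^ (M - i)) ((tBC ^ r) (E1 a b c w))
        = (tAC ^ (M - i)) ((tBC ^ r) (E3 a b c w)) := by
      rw [hsp, Module.End.mul_apply, Module.End.mul_apply, H3']
    have k24 : (tAC ^ (M - i)) ((tBC ^ r) (E2 a b c w))
        = (tAC ^ (M - i)) ((tBC ^ r) (E4 a b c w)) := by
      rw [hsp, Module.End.mul_apply, Module.End.mul_apply, H4']
    rw [k13, k24]
  · have hir' : M - r < i := Nat.lt_of_not_le hir
    have hd : (((n + (i:ℤ) - r).toNat : ℕ) : ℤ) = n + (i:ℤ) - r := by omega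
    set d : ℕ := (n + (i:ℤ) - r).toNat with hdd
    have p1 : Pop (n + (i:ℤ)) ((tAC ^ (M-i)) ((tBC ^ r) (E1 a b c w)))
        = Pop ((d:ℤ)) ((tAB ^ r) ((tAC ^ (M-i)) ((tBC ^ r) (E1 a b c w)))) := by
      rw [pop_tAB_pow ((d:ℤ)) r _ (hUB1i i)]
      congr 1
      rw [hd]
      ring
    have q2 : Qop (n + (i:ℤ)) ((tAC ^ (M-i)) ((tBC ^ r) (E2 a b c w)))
        = Qop ((d:ℤ)) ((tAB ^ r) ((tAC ^ (M-i)) ((tBC ^ r) (E2 a b c w)))) := by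
      rw [qop_tAB_pow ((d:ℤ)) r _ (hUB2i i)]
      congr 1
      rw [hd]
      ring
    have p3 : Pop (n + (i:ℤ)) ((tAC ^ (M-i)) ((tBC ^ r) (E3 a b c w)))
        = Pop ((d:ℤ)) ((tAB ^ r) ((tAC ^ (M-i)) ((tBC ^ r) (E3 a b c w)))) := by
      rw [pop_tAB_pow ((d:ℤ)) r _ (hUB3i i)]
      congr 1
      rw [hd]
      ring
    have q4 : Qop (n + (i:ℤ)) ((tAC ^ (M-i)) ((tBC ^ r) (E4 a b c w)))
        = Qop ((d:ℤ)) ((tAB ^ r) ((tAC ^ (M-i)) ((tBC ^ r) (E4 a b c w)))) := by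
      rw [qop_tAB_pow ((d:ℤ)) r _ (hUB4i i)]
      congr 1
      rw [hd]
      ring
    have hK12 : (tAB ^ r) ((tAC ^ (M-i)) ((tBC ^ r) (E1 a b c w)))
        = (tAB ^ r) ((tAC ^ (M-i)) ((tBC ^ r) (E2 a b c w))) := by
      rw [comm_apply commute_tAB_tAC r (M-i), comm_apply commute_tAB_tBC r r, L1,
        comm_apply commute_tAB_tAC r (M-i), comm_apply commute_tAB_tBC r r]
    have hK34 : (tAB ^ r) ((tAC ^ (M-i)) ((tBC ^ r) (E3 a b c w)))
        = (tAB ^ r) ((tAC ^ (M-i)) ((tBC ^ r) (E4 a b c w))) := by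
      rw [comm_apply commute_tAB_tAC r (M-i), comm_apply commute_tAB_tBC r r, L2,
        comm_apply commute_tAB_tAC r (M-i), comm_apply commute_tAB_tBC r r]
    rw [p1, q2, p3, q4, hK12, hK34, pop_eq_qop, pop_eq_qop, sub_self, sub_self]
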